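/- arXiv:1202.2304 — 5 statements merged into one kernel-verified Lean document; each statement's English description precedes it below -/
import Mathlib

section
/- Let p be an odd prime. Then the Platonic graph Π_p is p-vertex-connected: for every set S of vertices of Π_p with |S| < p, the induced subgraph of Π_p on the complement of S is connected (and nonempty). Since Π_p is p-regular, p is the maximal possible vertex connectivity. -/
/-- Pairs `(λ, μ) ∈ (ℤ/N)²` with `gcd(λ, μ, N) = 1`. -/
abbrev PlatonicPair (N : ℕ) : Type :=
  {x : ZMod N × ZMod N // Nat.gcd (Nat.gcd x.1.val x.2.val) N = 1}

/-- Identify `(λ,μ)` with `(-λ,-μ)`. -/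
instance platonicSetoid (N : ℕ) : Setoid (PlatonicPair N) where
  r x y := y.val = x.val ∨ y.val = -x.val
  iseqv := by
    refine ⟨fun _ => Or.inl rfl, ?_, ?_⟩
    · rintro x y (h | h)
      · exact Or.inl h.symm
      · right; rw [h, neg_neg]
    · rintro x y z (h1 | h1) (h2 | h2)
      · exact Or.inl (h2.trans h1)
      · right; rw [h2, h1]
      · right; rw [h2, h1]
      · left; rw [h2, h1, neg_neg]

/-- Vertices of the Platonic graph: classes `[λ,μ] = {(λ,μ), (-λ,-μ)}`. -/
abbrev PlatonicVertex (N : ℕ) : Type := Quotient (platonicSetoid N)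

/-- The Platonic graph `Π_N`: distinct classes `[λ,μ]`, `[ν,ω]` are adjacent
iff `λω - μν = ±1` in `ℤ/N`. -/
def Platonic (N : ℕ) : SimpleGraph (PlatonicVertex N) where
  Adj a b := a ≠ b ∧ ∃ x y : PlatonicPair N, ⟦x⟧ = a ∧ ⟦y⟧ = b ∧
    (x.val.1 * y.val.2 - x.val.2 * y.val.1 = 1 ∨
     x.val.1 * y.val.2 - x.val.2 * y.val.1 = -1)
  symm := ⟨by
    rintro a b ⟨hne, x, y, hx, hy, hdet⟩
    refine ⟨hne.symm, y, x, hy, hx, ?_⟩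
    rcases hdet with h | h
    · right; linear_combination -h
    · left; linear_combination -h⟩
  loopless := ⟨fun a h => h.1 rfl⟩

instance platonicDecRel (N : ℕ) :
    DecidableRel (α := PlatonicPair N) (· ≈ ·) := fun x y =>
  inferInstanceAs (Decidable (y.val = x.val ∨ y.val = -x.val))

instance (N : ℕ) : DecidableEq (PlatonicVertex N) :=
  @Quotient.decidableEq _ _ (platonicDecRel N)

instance (N : ℕ) [NeZero N] : Fintype (PlatonicVertex N) :=
  Quotient.fintype _

instance platonicAdjDec (N : ℕ) [NeZero N] : DecidableRel (Platonic N).Adj := fun a b =>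
  inferInstanceAs (Decidable (a ≠ b ∧ ∃ x y : PlatonicPair N, ⟦x⟧ = a ∧ ⟦y⟧ = b ∧
    (x.val.1 * y.val.2 - x.val.2 * y.val.1 = 1 ∨
     x.val.1 * y.val.2 - x.val.2 * y.val.1 = -1)))

/-- The class of `(λ,μ)` has nonvanishing second coordinate. -/
def secondNZ (N : ℕ) (v : PlatonicVertex N) : Prop :=
  ∀ x : PlatonicPair N, ⟦x⟧ = v → x.val.2 ≠ 0

instance (N : ℕ) [NeZero N] : DecidablePred (secondNZ N) := fun _ =>
  Fintype.decidableForallFintype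

/-- The modified Platonic graph `Π_p'`: induced subgraph of `Π_p` on the classes
`[λ,μ]` with `μ ≠ 0`. -/
def ModPlatonic (N : ℕ) : SimpleGraph {v : PlatonicVertex N | secondNZ N v} :=
  SimpleGraph.induce {v : PlatonicVertex N | secondNZ N v} (Platonic N)

instance (N : ℕ) [NeZero N] : DecidableRel (ModPlatonic N).Adj := fun a b =>
  inferInstanceAs (Decidable ((Platonic N).Adj a b))

/-! The vertices of `Π_p` lie on the `p + 1` lines through the origin of `(ℤ/p)²`, so a set of
fewer than `p` vertices misses some line `ℓ` entirely, and every vertex off `ℓ` has a neighbour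
on `ℓ`. Two vertices `[g]`, `[b g]` of `ℓ` are joined, for each `ν ∈ ℤ/p`, by the path
`[g] — [ν g + h] — [(ν / b - 1) g + h / b] — [b g]`, where `det (g, h) = 1`; these `p` paths have
pairwise disjoint interiors, so one of them avoids the removed set. -/

open Function SimpleGraph
open scoped LinearAlgebra.Projectivization

theorem Finset.exists_notMem_and_notMem_of_card_lt {ι α : Type*} [Fintype ι] (S : Finset α)
    {X Y : ι → α} (hX : Injective X) (hY : Injective Y) (hXY : ∀ i j, X i ≠ Y j)
    (hS : S.card < Fintype.card ι) : ∃ i, X i ∉ S ∧ Y i ∉ S := by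
  classical
  by_contra! h
  have : Fintype.card ι ≤ S.card := by
    refine Finset.card_le_card_of_injOn (fun i => if X i ∈ S then X i else Y i) ?_ ?_
    · intro i _
      dsimp only
      split_ifs with hi
      exacts [hi, h i hi]
    · intro i _ j _ hij
      dsimp only at hij
      split_ifs at hij
      exacts [hX hij, absurd hij (hXY i j), absurd hij.symm (hXY j i), hY hij]
  omega

theorem SimpleGraph.connected_induce_of_dominating {V : Type*} {G : SimpleGraph V} {s L : Set V}
    (hLs : L ⊆ s) (hL : L.Nonempty) (hdom : ∀ v ∈ s, v ∉ L → ∃ w ∈ L, G.Adj v w)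
    (hreach : ∀ u (hu : u ∈ L) w (hw : w ∈ L), u ≠ w →
      (G.induce s).Reachable ⟨u, hLs hu⟩ ⟨w, hLs hw⟩) :
    (G.induce s).Connected := by
  have reach_L : ∀ u (hu : u ∈ L) w (hw : w ∈ L),
      (G.induce s).Reachable ⟨u, hLs hu⟩ ⟨w, hLs hw⟩ := by
    intro u hu w hw
    by_cases huw : u = w
    · subst huw; rfl
    · exact hreach u hu w hw huw
  have reach_to_L : ∀ v (hv : v ∈ s), ∃ w, ∃ hw : w ∈ L,
      (G.induce s).Reachable ⟨v, hv⟩ ⟨w, hLs hw⟩ := by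
    intro v hv
    by_cases hvL : v ∈ L
    · exact ⟨v, hvL, .rfl⟩
    · obtain ⟨w, hw, hadj⟩ := hdom v hv hvL
      exact ⟨w, hw, (induce_adj.2 hadj).reachable⟩
  obtain ⟨l, hl⟩ := hL
  refine (connected_iff _).2 ⟨fun ⟨v, hv⟩ ⟨w, hw⟩ => ?_, ⟨⟨l, hLs hl⟩⟩⟩
  obtain ⟨v', hv', hvv'⟩ := reach_to_L v hv
  obtain ⟨w', hw', hww'⟩ := reach_to_L w hw
  exact (hvv'.trans (reach_L v' hv' w' hw')).trans hww'.symm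

section PairDet

variable {R : Type*} [CommRing R]

def pairDet (x y : R × R) : R := x.1 * y.2 - x.2 * y.1

@[simp] theorem pairDet_self (x : R × R) : pairDet x x = 0 := by
  simp only [pairDet]; ring

theorem pairDet_swap (x y : R × R) : pairDet y x = -pairDet x y := by
  simp only [pairDet]; ring

@[simp] theorem pairDet_add_left (x y z : R × R) :
    pairDet (x + y) z = pairDet x z + pairDet y z := by
  simp only [pairDet, Prod.fst_add, Prod.snd_add]; ring

@[simp] theorem pairDet_add_right (x y z : R × R) :
    pairDet x (y + z) = pairDet x y + pairDet x z := by
  simp only [pairDet, Prod.fst_add, Prod.snd_add]; ring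

@[simp] theorem pairDet_smul_left (a : R) (x y : R × R) :
    pairDet (a • x) y = a * pairDet x y := by
  simp only [pairDet, Prod.smul_fst, Prod.smul_snd, smul_eq_mul]; ring

@[simp] theorem pairDet_smul_right (a : R) (x y : R × R) :
    pairDet x (a • y) = a * pairDet x y := by
  simp only [pairDet, Prod.smul_fst, Prod.smul_snd, smul_eq_mul]; ring

@[simp] theorem pairDet_neg_left (x y : R × R) : pairDet (-x) y = -pairDet x y := by
  simp only [pairDet, Prod.fst_neg, Prod.snd_neg]; ring

@[simp] theorem pairDet_neg_right (x y : R × R) : pairDet x (-y) = -pairDet x y := by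
  simp only [pairDet, Prod.fst_neg, Prod.snd_neg]; ring

@[simp] theorem pairDet_zero_right (x : R × R) : pairDet x 0 = 0 := by
  simp [pairDet]

theorem ne_zero_of_pairDet_ne_zero {x y : R × R} (h : pairDet x y ≠ 0) : y ≠ 0 := by
  rintro rfl; simp at h

/-- Cramer's rule. -/
theorem pairDet_smul_add_pairDet_smul {g h : R × R} (hgh : pairDet g h = 1) (x : R × R) :
    pairDet x h • g + pairDet g x • h = x := by
  simp only [pairDet] at hgh
  ext <;>
    simp only [pairDet, Prod.fst_add, Prod.snd_add, Prod.smul_fst, Prod.smul_snd, smul_eq_mul]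
  · linear_combination x.1 * hgh
  · linear_combination x.2 * hgh

end PairDet

section PairDetField

variable {K : Type*} [Field K]

theorem exists_pairDet_eq_one {g : K × K} (hg : g ≠ 0) : ∃ h, pairDet g h = 1 := by
  by_cases hg₁ : g.1 = 0
  · have hg₂ : g.2 ≠ 0 := fun hg₂ => hg (Prod.ext hg₁ hg₂)
    exact ⟨(-g.2⁻¹, 0), by simp [pairDet, hg₁, hg₂]⟩
  · exact ⟨(0, g.1⁻¹), by simp [pairDet, hg₁]⟩

theorem mk_eq_mk_iff_pairDet_eq_zero {x g : K × K} (hx : x ≠ 0) (hg : g ≠ 0) :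
    Projectivization.mk K x hx = Projectivization.mk K g hg ↔ pairDet x g = 0 := by
  rw [Projectivization.mk_eq_mk_iff']
  constructor
  · rintro ⟨a, rfl⟩
    simp
  · intro hxg
    obtain ⟨h, hgh⟩ := exists_pairDet_eq_one hg
    refine ⟨pairDet x h, ?_⟩
    simpa [pairDet_swap x g, hxg] using pairDet_smul_add_pairDet_smul hgh x

end PairDetField

namespace Platonic

variable {p : ℕ} [Fact p.Prime]

theorem gcd_val_eq_one_iff (x : ZMod p × ZMod p) :
    Nat.gcd (Nat.gcd x.1.val x.2.val) p = 1 ↔ x ≠ 0 := by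
  have hdvd (a : ZMod p) : p ∣ a.val ↔ a = 0 := by
    rw [← ZMod.natCast_eq_zero_iff, ZMod.natCast_zmod_val]
  rw [Nat.gcd_comm, ← Nat.Coprime, Nat.Prime.coprime_iff_not_dvd Fact.out, Nat.dvd_gcd_iff,
    hdvd, hdvd, Ne, Prod.ext_iff]
  rfl

def mkVertex (x : ZMod p × ZMod p) (hx : x ≠ 0) : PlatonicVertex p :=
  ⟦⟨x, (gcd_val_eq_one_iff x).2 hx⟩⟧

theorem mkVertex_eq_mkVertex_iff {x y : ZMod p × ZMod p} {hx : x ≠ 0} {hy : y ≠ 0} :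
    mkVertex x hx = mkVertex y hy ↔ y = x ∨ y = -x :=
  Quotient.eq

theorem exists_eq_mkVertex (v : PlatonicVertex p) : ∃ x hx, v = mkVertex x hx :=
  Quotient.inductionOn v fun x => ⟨x.1, (gcd_val_eq_one_iff x.1).1 x.2, rfl⟩

theorem adj_mkVertex {x y : ZMod p × ZMod p} {hx : x ≠ 0} {hy : y ≠ 0}
    (h : pairDet x y = 1 ∨ pairDet x y = -1) :
    (Platonic p).Adj (mkVertex x hx) (mkVertex y hy) := by
  refine ⟨fun hxy => ?_, _, _, rfl, rfl, h⟩
  have : pairDet x y = 0 := by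
    rcases mkVertex_eq_mkVertex_iff.1 hxy with rfl | rfl <;> simp
  rcases h with h | h <;> simp [this] at h

theorem mkVertex_smul_add_smul_eq {g h : ZMod p × ZMod p} (hgh : pairDet g h = 1)
    {s t s' t' : ZMod p} {hx : s • g + t • h ≠ 0} {hy : s' • g + t' • h ≠ 0}
    (heq : mkVertex (s • g + t • h) hx = mkVertex (s' • g + t' • h) hy) :
    s' = s ∧ t' = t ∨ s' = -s ∧ t' = -t := by
  rcases mkVertex_eq_mkVertex_iff.1 heq with e | e <;> [left; right] <;>
    exact ⟨by simpa [hgh] using congrArg (pairDet · h) e, by simpa [hgh] using congrArg (pairDet g) e⟩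

def line : PlatonicVertex p → ℙ (ZMod p) (ZMod p × ZMod p) :=
  Quotient.lift (fun x => .mk _ x.1 ((gcd_val_eq_one_iff x.1).1 x.2)) <| by
    rintro x y h
    refine (Projectivization.mk_eq_mk_iff' _ _ _ _ _).2 ?_
    rcases h with h | h
    exacts [⟨1, by simp [h]⟩, ⟨-1, by simp [h]⟩]

@[simp] theorem line_mkVertex (x : ZMod p × ZMod p) (hx : x ≠ 0) :
    line (mkVertex x hx) = .mk _ x hx :=
  rfl

theorem exists_line_forall_ne {S : Finset (PlatonicVertex p)} (hS : S.card < p + 1) :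
    ∃ c, ∀ v ∈ S, line v ≠ c := by
  by_contra! h
  have hsurj : Surjective fun v : S => line v.1 := fun c => by
    obtain ⟨v, hv, rfl⟩ := h c
    exact ⟨⟨v, hv⟩, rfl⟩
  have hcard : Nat.card (ℙ (ZMod p) (ZMod p × ZMod p)) = p + 1 := by
    rw [Projectivization.card_of_finrank_two, Nat.card_zmod]
    simp
  have := Nat.card_le_card_of_surjective _ hsurj
  simp only [hcard, Nat.card_eq_fintype_card, Fintype.card_coe] at this
  omega

theorem exists_adj_line_eq {v : PlatonicVertex p} {c : ℙ (ZMod p) (ZMod p × ZMod p)}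
    (hv : line v ≠ c) : ∃ w, line w = c ∧ (Platonic p).Adj v w := by
  obtain ⟨x, hx, rfl⟩ := exists_eq_mkVertex v
  induction c using Projectivization.ind with | h g hg => ?_
  have hxg : pairDet x g ≠ 0 := by
    rwa [line_mkVertex, Ne, mk_eq_mk_iff_pairDet_eq_zero] at hv
  refine ⟨mkVertex ((pairDet x g)⁻¹ • g) (smul_ne_zero (inv_ne_zero hxg) hg), ?_,
    adj_mkVertex (.inl (by simp [hxg]))⟩
  exact (Projectivization.mk_eq_mk_iff' _ _ _ _ _).2 ⟨_, rfl⟩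


theorem reachable_mkVertex_smul (hodd : Odd p) {S : Finset (PlatonicVertex p)} (hS : S.card < p)
    {g h : ZMod p × ZMod p} (hgh : pairDet g h = 1) {b : ZMod p} (hb : b ≠ 0) (hb₁ : b ≠ 1)
    (hb₂ : b ≠ -1) {hg : g ≠ 0} {hbg : b • g ≠ 0} (hu : mkVertex g hg ∉ S)
    (hw : mkVertex (b • g) hbg ∉ S) :
    (induce {v | v ∉ S} (Platonic p)).Reachable ⟨_, hu⟩ ⟨_, hw⟩ := by
  let X (ν : ZMod p) : PlatonicVertex p :=
    mkVertex (ν • g + (1 : ZMod p) • h) (ne_zero_of_pairDet_ne_zero (x := g) (by simp [hgh]))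
  let Y (ν : ZMod p) : PlatonicVertex p := mkVertex ((ν * b⁻¹ - 1) • g + b⁻¹ • h)
    (ne_zero_of_pairDet_ne_zero (x := g) (by simp [hgh, hb]))
  have hX : Injective X := fun ν μ e => by
    rcases mkVertex_smul_add_smul_eq hgh e with ⟨e, -⟩ | ⟨-, e⟩
    exacts [e.symm, absurd e (ZMod.ne_neg_self hodd one_ne_zero)]
  have hY : Injective Y := fun ν μ e => by
    rcases mkVertex_smul_add_smul_eq hgh e with ⟨e, -⟩ | ⟨-, e⟩
    · simpa [hb] using e.symm
    · exact absurd e (ZMod.ne_neg_self hodd (inv_ne_zero hb))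
  have hXY : ∀ ν μ, X ν ≠ Y μ := fun ν μ e => by
    rcases mkVertex_smul_add_smul_eq hgh e with ⟨-, e⟩ | ⟨-, e⟩
    exacts [hb₁ (inv_eq_one.1 e), hb₂ (by simpa using congrArg (·⁻¹) e)]
  obtain ⟨ν, hXν, hYν⟩ := S.exists_notMem_and_notMem_of_card_lt hX hY hXY (by simpa using hS)
  have adj₁ : (Platonic p).Adj (mkVertex g hg) (X ν) := adj_mkVertex (.inl (by simp [hgh]))
  have adj₂ : (Platonic p).Adj (X ν) (Y ν) :=
    adj_mkVertex (.inl (by simp [hgh, pairDet_swap g h]; field_simp; ring))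
  have adj₃ : (Platonic p).Adj (Y ν) (mkVertex (b • g) hbg) :=
    adj_mkVertex (.inr (by simp [hgh, pairDet_swap g h, hb]))
  exact ((induce_adj.2 adj₁).reachable.trans (v := ⟨_, hXν⟩) (induce_adj.2 adj₂).reachable).trans
    (v := ⟨_, hYν⟩) (induce_adj.2 adj₃).reachable

theorem reachable_of_line_eq (hodd : Odd p) {S : Finset (PlatonicVertex p)} (hS : S.card < p)
    {u w : PlatonicVertex p} (hu : u ∉ S) (hw : w ∉ S) (huw : line u = line w) (hne : u ≠ w) :
    (induce {v | v ∉ S} (Platonic p)).Reachable ⟨u, hu⟩ ⟨w, hw⟩ := by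
  obtain ⟨g, hg, rfl⟩ := exists_eq_mkVertex u
  obtain ⟨y, hy, rfl⟩ := exists_eq_mkVertex w
  obtain ⟨b, rfl⟩ := (Projectivization.mk_eq_mk_iff' _ _ _ hy hg).1 huw.symm
  obtain ⟨h, hgh⟩ := exists_pairDet_eq_one hg
  refine reachable_mkVertex_smul hodd hS hgh (left_ne_zero_of_smul hy) ?_ ?_ hu hw
  · rintro rfl
    exact hne (mkVertex_eq_mkVertex_iff.2 (.inl (one_smul _ _)))
  · rintro rfl
    exact hne (mkVertex_eq_mkVertex_iff.2 (.inr (neg_one_smul _ _)))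

end Platonic

/-- The Platonic graph `Π_p` is `p`-vertex-connected for an odd prime `p`:
removing fewer than `p` vertices leaves a (nonempty) connected induced subgraph. -/
theorem platonic_vertex_connectivity (p : ℕ) (hp : p.Prime) (hodd : Odd p)
    (S : Finset (PlatonicVertex p)) (hS : S.card < p) :
    (SimpleGraph.induce {v : PlatonicVertex p | v ∉ S} (Platonic p)).Connected := by
  have : Fact p.Prime := ⟨hp⟩
  obtain ⟨c, hc⟩ := Platonic.exists_line_forall_ne (S := S) (by omega)
  have hcS : {v | Platonic.line v = c} ⊆ {v | v ∉ S} := fun v hv hvS => hc v hvS hv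
  refine connected_induce_of_dominating hcS ?_ (fun v _ hv => Platonic.exists_adj_line_eq hv)
    (fun u hu w hw huw => Platonic.reachable_of_line_eq hodd hS _ _ (hu.trans hw.symm) huw)
  induction c using Projectivization.ind with
  | h g hg => exact ⟨Platonic.mkVertex g hg, rfl⟩
end

section
/- Let p be an odd prime. Then the modified Platonic graph Π_p' is (p−1)-vertex-connected: for every set S of vertices of Π_p' with |S| < p−1, the induced subgraph of Π_p' on the complement of S is connected (and nonempty). Since Π_p' is (p−1)-regular, p−1 is the maximal possible vertex connectivity. -/
/-!
Pick a slope `A` taken by no vertex of `S` (there are `p` slopes and `|S| < p`). The vertices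
`[A m, m]` of slope `A` survive, and every vertex `[a, b]` either has slope `A` or is adjacent to
`[A m, m]` with `m = (a - A b)⁻¹`. Two vertices `[A m, m]`, `[A m', m']` are joined by `p - 1`
paths of length three with pairwise disjoint interiors, so one of them misses `S`; pairing the
residues `1, …, p - 1` as `{1, 2}, {3, 4}, …` is what makes `p - 1` such paths available.
-/

open Finset

theorem Finset.exists_notMem_and_notMem_of_card_lt_s3 {ι α : Type*} {I : Finset ι} {S : Finset α}
    {f g : ι → α} (hf : Set.InjOn f I) (hg : Set.InjOn g I) (hfg : ∀ i ∈ I, ∀ j ∈ I, f i ≠ g j)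
    (hS : #S < #I) : ∃ i ∈ I, f i ∉ S ∧ g i ∉ S := by
  by_contra! h
  refine hS.not_ge (card_le_card_of_forall_subsingleton (fun i a => a = f i ∨ a = g i)
    (fun i hi => ?_) (fun a _ => ?_))
  · by_cases hfi : f i ∈ S
    · exact ⟨_, hfi, .inl rfl⟩
    · exact ⟨_, h i hi hfi, .inr rfl⟩
  · rintro i ⟨hi, rfl | rfl⟩ j ⟨hj, hij | hij⟩
    · exact hf hi hj hij
    · exact absurd hij (hfg i hi j hj)
    · exact absurd hij.symm (hfg j hj i hi)
    · exact hg hi hj hij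

lemma ZMod.natCast_ne_zero_of_pos_of_lt {n k : ℕ} (h0 : 0 < k) (hk : k < n) :
    (k : ZMod n) ≠ 0 := by
  rw [Ne, ZMod.natCast_eq_zero_iff]
  exact fun h => (Nat.le_of_dvd h0 h).not_gt hk

lemma ZMod.natCast_injOn_Iio (n : ℕ) : Set.InjOn (Nat.cast : ℕ → ZMod n) (Set.Iio n) :=
  fun k hk k' hk' h => by
    simpa [ZMod.val_cast_of_lt hk, ZMod.val_cast_of_lt hk'] using congrArg ZMod.val h

def pairSwap (n : ℕ) : ℕ := if n % 2 = 1 then n + 1 else n - 1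

lemma pairSwap_mem_Ico {p n : ℕ} (hp : Odd p) (hn : n ∈ Ico 1 p) : pairSwap n ∈ Ico 1 p := by
  obtain ⟨k, rfl⟩ := hp
  simp only [mem_Ico, pairSwap] at hn ⊢
  split_ifs <;> omega

lemma pairSwap_injOn : Set.InjOn pairSwap {n | 1 ≤ n} := by
  intro n hn n' hn' h
  simp only [Set.mem_ofPred_eq, pairSwap] at hn hn' h
  split_ifs at h <;> omega

lemma natCast_pairSwap_sub {R : Type*} [Ring R] {n : ℕ} (hn : 1 ≤ n) :
    (pairSwap n : R) - n = 1 ∨ (pairSwap n : R) - n = -1 := by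
  unfold pairSwap
  split_ifs
  · left; push_cast; abel
  · right; rw [Nat.cast_sub hn, Nat.cast_one]; abel

lemma PlatonicVertex.mk_eq_mk_iff {N : ℕ} {x y : PlatonicPair N} :
    (⟦x⟧ : PlatonicVertex N) = ⟦y⟧ ↔ y.val = x.val ∨ y.val = -x.val :=
  Quotient.eq

namespace ModPlatonic

variable {p : ℕ} [Fact p.Prime]

lemma gcd_gcd_val_eq_one {a b : ZMod p} (hb : b ≠ 0) :
    Nat.gcd (Nat.gcd a.val b.val) p = 1 := by
  have hunit : IsUnit ((b.val : ℕ) : ZMod p) := by simpa using hb.isUnit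
  exact ((ZMod.isUnit_iff_coprime _ _).1 hunit).coprime_dvd_left (Nat.gcd_dvd_right _ _)

lemma secondNZ_mk {a b : ZMod p} (hb : b ≠ 0) :
    secondNZ p ⟦⟨(a, b), gcd_gcd_val_eq_one hb⟩⟧ := by
  rintro ⟨⟨c, d⟩, _⟩ h
  rcases PlatonicVertex.mk_eq_mk_iff.1 h with h | h <;> rintro rfl <;> simp_all [Prod.ext_iff]

/-- `[a, b]`, with the junk value `[0, 1]` when `b = 0`. -/
def vertex (a b : ZMod p) : {v : PlatonicVertex p | secondNZ p v} :=
  if hb : b = 0 then ⟨_, secondNZ_mk (a := 0) one_ne_zero⟩ else ⟨_, secondNZ_mk (a := a) hb⟩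

lemma coe_vertex {a b : ZMod p} (hb : b ≠ 0) :
    (vertex a b : PlatonicVertex p) = ⟦⟨(a, b), gcd_gcd_val_eq_one hb⟩⟧ := by
  simp [vertex, hb]

lemma vertex_eq_vertex_iff {a b c d : ZMod p} (hb : b ≠ 0) (hd : d ≠ 0) :
    vertex a b = vertex c d ↔ (c = a ∧ d = b) ∨ (c = -a ∧ d = -b) := by
  rw [← Subtype.coe_inj, coe_vertex hb, coe_vertex hd, PlatonicVertex.mk_eq_mk_iff]
  simp [Prod.ext_iff]

lemma exists_eq_vertex (v : {v : PlatonicVertex p | secondNZ p v}) :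
    ∃ a b, b ≠ 0 ∧ v = vertex a b := by
  obtain ⟨v, hv⟩ := v
  induction v using Quotient.inductionOn with | h x => ?_
  refine ⟨x.val.1, x.val.2, hv x rfl, Subtype.ext ?_⟩
  rw [coe_vertex (hv x rfl)]

lemma adj_vertex {a b c d : ZMod p} (hb : b ≠ 0) (hd : d ≠ 0)
    (hdet : a * d - b * c = 1 ∨ a * d - b * c = -1) :
    (ModPlatonic p).Adj (vertex a b) (vertex c d) := by
  refine ⟨fun h => ?_, _, _, (coe_vertex hb).symm, (coe_vertex hd).symm, hdet⟩
  have hzero : a * d - b * c = 0 := by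
    rcases (vertex_eq_vertex_iff hb hd).1 (Subtype.ext h) with ⟨rfl, rfl⟩ | ⟨rfl, rfl⟩ <;> ring
  rcases hdet with h | h <;> simp [hzero] at h

def slope (v : {v : PlatonicVertex p | secondNZ p v}) : ZMod p :=
  Quotient.lift (fun x : PlatonicPair p => x.val.1 / x.val.2)
    (by rintro x y (h | h) <;> simp [h, neg_div_neg_eq]) v.1

lemma slope_vertex {a b : ZMod p} (hb : b ≠ 0) : slope (vertex a b) = a / b := by
  simp only [slope, coe_vertex hb, Quotient.lift_mk]

lemma exists_forall_slope_ne {S : Finset {v : PlatonicVertex p | secondNZ p v}} (hS : #S < p) :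
    ∃ A, ∀ v ∈ S, slope v ≠ A := by
  obtain ⟨A, -, hA⟩ := exists_mem_notMem_of_card_lt_card (s := S.image slope) (t := univ)
    (by simpa using (card_image_le.trans_lt hS))
  exact ⟨A, fun v hv h => hA (mem_image.2 ⟨v, hv, h⟩)⟩

lemma exists_eq_or_adj_vertex_mul (A : ZMod p) (v : {v : PlatonicVertex p | secondNZ p v}) :
    ∃ m ≠ 0, v = vertex (A * m) m ∨ (ModPlatonic p).Adj v (vertex (A * m) m) := by
  obtain ⟨a, b, hb, rfl⟩ := exists_eq_vertex v
  by_cases h : a - A * b = 0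
  · exact ⟨b, hb, .inl (by rw [sub_eq_zero.1 h])⟩
  · refine ⟨(a - A * b)⁻¹, inv_ne_zero h, .inr ?_⟩
    exact adj_vertex hb (inv_ne_zero h) (.inl (by field_simp))

section Fiber

variable {A : ZMod p}

lemma adj_vertex_mul_vertex_sub_inv {m u : ZMod p} (hm : m ≠ 0) (hu : u ≠ 0) :
    (ModPlatonic p).Adj (vertex (A * m) m) (vertex (A * u - m⁻¹) u) :=
  adj_vertex hm hu (.inl (by field_simp; ring))

lemma adj_vertex_sub_inv {m m' u u' : ZMod p} (hu : u ≠ 0) (hu' : u' ≠ 0)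
    (h : u * m'⁻¹ - u' * m⁻¹ = 1 ∨ u * m'⁻¹ - u' * m⁻¹ = -1) :
    (ModPlatonic p).Adj (vertex (A * u - m⁻¹) u) (vertex (A * u' - m'⁻¹) u') :=
  adj_vertex hu hu' (by convert h using 2 <;> ring)

lemma eq_of_vertex_sub_inv_eq {m m' u u' : ZMod p} (hu : u ≠ 0) (hu' : u' ≠ 0)
    (h : vertex (A * u - m⁻¹) u = vertex (A * u' - m'⁻¹) u') :
    m * u = m' * u' ∧ (m' = m ∨ m' = -m) := by
  rcases (vertex_eq_vertex_iff hu hu').1 h with ⟨h1, rfl⟩ | ⟨h1, rfl⟩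
  · obtain rfl : m' = m := inv_injective (by linear_combination -h1)
    exact ⟨rfl, .inl rfl⟩
  · obtain rfl : m' = -m := inv_injective (by rw [inv_neg]; linear_combination -h1)
    exact ⟨by ring, .inr rfl⟩

lemma natCast_mul_ne_zero {k : ℕ} {c : ZMod p} (hk : k ∈ Ico 1 p) (hc : c ≠ 0) :
    (k : ZMod p) * c ≠ 0 :=
  mul_ne_zero (ZMod.natCast_ne_zero_of_pos_of_lt (mem_Ico.1 hk).1 (mem_Ico.1 hk).2) hc

/-- For `1 ≤ k < p`, the pairs of vertices `[A k m' - m⁻¹, k m']`, `[A l m - m'⁻¹, l m]` with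
`l = pairSwap k` are pairwise disjoint, so one of these `p - 1` pairs avoids `S`. -/
lemma exists_vertex_sub_inv_notMem {S : Finset {v : PlatonicVertex p | secondNZ p v}}
    (hodd : Odd p) (hS : #S < p - 1) {m m' : ZMod p} (hm : m ≠ 0) (hm' : m' ≠ 0)
    (hmm : ¬(m' = m ∨ m' = -m)) :
    ∃ k ∈ Ico 1 p, vertex (A * ((k : ZMod p) * m') - m⁻¹) (k * m') ∉ S ∧
      vertex (A * ((pairSwap k : ZMod p) * m) - m'⁻¹) (pairSwap k * m) ∉ S := by
  have hl {k : ℕ} (hk : k ∈ Ico 1 p) := pairSwap_mem_Ico hodd hk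
  have hcast {k k' : ℕ} (hk : k ∈ Ico 1 p) (hk' : k' ∈ Ico 1 p) (h : (k : ZMod p) = k') :
      k = k' :=
    ZMod.natCast_injOn_Iio p (mem_Ico.1 hk).2 (mem_Ico.1 hk').2 h
  refine exists_notMem_and_notMem_of_card_lt_s3
    (fun k hk k' hk' heq => hcast hk hk' <| mul_right_cancel₀ hm' <| mul_left_cancel₀ hm
      (eq_of_vertex_sub_inv_eq (natCast_mul_ne_zero hk hm') (natCast_mul_ne_zero hk' hm') heq).1)
    (fun k hk k' hk' heq => pairSwap_injOn (mem_Ico.1 hk).1 (mem_Ico.1 hk').1 <|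
      hcast (hl hk) (hl hk') <| mul_right_cancel₀ hm <| mul_left_cancel₀ hm'
      (eq_of_vertex_sub_inv_eq (natCast_mul_ne_zero (hl hk) hm)
        (natCast_mul_ne_zero (hl hk') hm) heq).1)
    (fun k hk k' hk' heq => hmm (eq_of_vertex_sub_inv_eq (natCast_mul_ne_zero hk hm')
      (natCast_mul_ne_zero (hl hk') hm) heq).2)
    (by simpa using hS)

lemma reachable_vertex_mul {S : Finset {v : PlatonicVertex p | secondNZ p v}} (hodd : Odd p)
    (hS : #S < p - 1) {m m' : ZMod p} (hm : m ≠ 0) (hm' : m' ≠ 0)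
    (h : vertex (A * m) m ∉ S) (h' : vertex (A * m') m' ∉ S) :
    ((ModPlatonic p).induce {v | v ∉ S}).Reachable ⟨_, h⟩ ⟨_, h'⟩ := by
  by_cases hmm : m' = m ∨ m' = -m
  · have heq : vertex (A * m) m = vertex (A * m') m' := by
      refine (vertex_eq_vertex_iff hm hm').2 ?_
      rcases hmm with rfl | rfl
      · exact .inl ⟨rfl, rfl⟩
      · exact .inr ⟨by ring, rfl⟩
    exact (Subtype.ext heq : (⟨_, h⟩ : {v | v ∉ S}) = ⟨_, h'⟩) ▸ .rfl
  obtain ⟨k, hk, hf, hg⟩ := exists_vertex_sub_inv_notMem hodd hS hm hm' hmm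
  have hl := pairSwap_mem_Ico hodd hk
  have a₁ : ((ModPlatonic p).induce {v | v ∉ S}).Adj ⟨_, h⟩ ⟨_, hf⟩ :=
    adj_vertex_mul_vertex_sub_inv hm (natCast_mul_ne_zero hk hm')
  have a₂ : ((ModPlatonic p).induce {v | v ∉ S}).Adj ⟨_, hf⟩ ⟨_, hg⟩ := by
    refine adj_vertex_sub_inv (natCast_mul_ne_zero hk hm') (natCast_mul_ne_zero hl hm) ?_
    field_simp
    rcases natCast_pairSwap_sub (R := ZMod p) (mem_Ico.1 hk).1 with h | h
    · exact .inr (by linear_combination -h)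
    · exact .inl (by linear_combination -h)
  have a₃ : ((ModPlatonic p).induce {v | v ∉ S}).Adj ⟨_, hg⟩ ⟨_, h'⟩ :=
    (adj_vertex_mul_vertex_sub_inv hm' (natCast_mul_ne_zero hl hm)).symm
  exact a₁.reachable.trans (a₂.reachable.trans a₃.reachable)

end Fiber

end ModPlatonic

open ModPlatonic

/-- The modified Platonic graph `Π_p'` is `(p-1)`-vertex-connected for an odd prime `p`:
removing fewer than `p-1` vertices leaves a (nonempty) connected induced subgraph. -/
theorem modPlatonic_vertex_connectivity (p : ℕ) (hp : p.Prime) (hodd : Odd p)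
    (S : Finset {v : PlatonicVertex p | secondNZ p v}) (hS : S.card < p - 1) :
    (SimpleGraph.induce {v : {v : PlatonicVertex p | secondNZ p v} | v ∉ S}
      (ModPlatonic p)).Connected := by
  have := Fact.mk hp
  obtain ⟨A, hA⟩ := exists_forall_slope_ne (S := S) (by omega)
  have hub {m : ZMod p} (hm : m ≠ 0) : vertex (A * m) m ∉ S := fun hmem =>
    hA _ hmem (by rw [slope_vertex hm, mul_div_cancel_right₀ A hm])
  rw [SimpleGraph.connected_iff_exists_forall_reachable]
  refine ⟨⟨_, hub one_ne_zero⟩, fun ⟨v, hv⟩ => ?_⟩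
  obtain ⟨m, hm, rfl | hadj⟩ := exists_eq_or_adj_vertex_mul A v
  · exact reachable_vertex_mul hodd hS one_ne_zero hm _ _
  · exact (reachable_vertex_mul hodd hS one_ne_zero hm _ (hub hm)).trans
      (SimpleGraph.induce_adj.2 hadj).reachable.symm
end

section
/- Let p be an odd prime and let i ≠ j with 1 ≤ i, j ≤ (p−1)/2. Then there exists a bijection Φ from the set of neighbours of [i,0] in Π_p to the set of neighbours of [j,0] in Π_p such that v is adjacent to Φ(v) in Π_p for every neighbour v of [i,0]. Explicitly, one may take Φ([μ, i⁻¹]) = [i + i·j⁻¹·μ, j⁻¹]. -/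
/-! For `I ≠ 0` in `ZMod p`, a class `[x, y]` is adjacent to `[I, 0]` iff `I y = ±1`, i.e.
`y = ±I⁻¹`; so the neighbours of `[I, 0]` are the classes `[μ, I⁻¹]`, and these are pairwise
distinct because `I⁻¹ ≠ -I⁻¹` for odd `p`. The affine bijection `μ ↦ I + I J⁻¹ μ` then sends
`[μ, I⁻¹]` to an adjacent vertex `[I + I J⁻¹ μ, J⁻¹]`: the determinant
`μ J⁻¹ - I⁻¹ (I + I J⁻¹ μ)` equals `-1`, and the two classes differ as `I ≠ ±J` when
`1 ≤ i, j ≤ (p - 1) / 2` are distinct. -/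

theorem Platonic.adj_mk_iff {N : ℕ} (x y : PlatonicPair N) :
    (Platonic N).Adj ⟦x⟧ ⟦y⟧ ↔ (⟦x⟧ : PlatonicVertex N) ≠ ⟦y⟧ ∧
      (x.val.1 * y.val.2 - x.val.2 * y.val.1 = 1 ∨
       x.val.1 * y.val.2 - x.val.2 * y.val.1 = -1) := by
  refine ⟨fun ⟨hne, x', y', hx, hy, hdet⟩ => ⟨hne, ?_⟩,
    fun ⟨hne, hdet⟩ => ⟨hne, x, y, rfl, rfl, hdet⟩⟩
  obtain ⟨⟨a, b⟩, _⟩ := x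
  obtain ⟨⟨c, d⟩, _⟩ := y
  rcases Quotient.exact hx with hx | hx <;> rcases Quotient.exact hy with hy | hy <;>
    simp only [Prod.ext_iff, Prod.fst_neg, Prod.snd_neg] at hx hy <;>
    simp only [hx, hy] <;> grind

namespace PlatonicVertex

variable {p : ℕ} [Fact p.Prime]

theorem gcd_val_eq_one {x y : ZMod p} (h : x ≠ 0 ∨ y ≠ 0) :
    Nat.gcd (Nat.gcd x.val y.val) p = 1 := by
  rcases h with h | h
  · exact (ZMod.val_coe_unit_coprime (Units.mk0 x h)).coprime_dvd_left (Nat.gcd_dvd_left _ _)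
  · exact (ZMod.val_coe_unit_coprime (Units.mk0 y h)).coprime_dvd_left (Nat.gcd_dvd_right _ _)

def mk (x y : ZMod p) (h : x ≠ 0 ∨ y ≠ 0) : PlatonicVertex p :=
  ⟦⟨(x, y), gcd_val_eq_one h⟩⟧

theorem mk_eq_mk_iff_s12 {x y x' y' : ZMod p} (h : x ≠ 0 ∨ y ≠ 0) (h' : x' ≠ 0 ∨ y' ≠ 0) :
    mk x y h = mk x' y' h' ↔ x' = x ∧ y' = y ∨ x' = -x ∧ y' = -y := by
  simp only [mk, Quotient.eq]
  exact or_congr Prod.ext_iff Prod.ext_iff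

theorem exists_eq_mk (v : PlatonicVertex p) : ∃ x y h, v = mk x y h := by
  induction v using Quotient.inductionOn with | h v => ?_
  obtain ⟨⟨x, y⟩, hxy⟩ := v
  refine ⟨x, y, ?_, rfl⟩
  by_contra! h
  obtain ⟨rfl, rfl⟩ := h
  simp only [ZMod.val_zero, Nat.gcd_zero_left] at hxy
  exact (Fact.out : p.Prime).ne_one hxy

theorem eq_mk {a : PlatonicVertex p} {x y : ZMod p} (h : x ≠ 0 ∨ y ≠ 0)
    (ha : ∃ v : PlatonicPair p, ⟦v⟧ = a ∧ v.val = (x, y)) : a = mk x y h := by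
  obtain ⟨v, rfl, hv⟩ := ha
  exact congrArg _ (Subtype.ext hv)

theorem adj_mk_iff {x y x' y' : ZMod p} (h : x ≠ 0 ∨ y ≠ 0) (h' : x' ≠ 0 ∨ y' ≠ 0) :
    (Platonic p).Adj (mk x y h) (mk x' y' h') ↔
      mk x y h ≠ mk x' y' h' ∧ (x * y' - y * x' = 1 ∨ x * y' - y * x' = -1) :=
  Platonic.adj_mk_iff _ _

theorem adj_mk_zero_iff {I x y : ZMod p} (hI : I ≠ 0) (h : x ≠ 0 ∨ y ≠ 0) :
    (Platonic p).Adj (mk I 0 (Or.inl hI)) (mk x y h) ↔ y = I⁻¹ ∨ y = -I⁻¹ := by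
  rw [adj_mk_iff, ne_eq, mk_eq_mk_iff_s12, zero_mul, sub_zero, ← eq_inv_mul_iff_mul_eq₀ hI,
    ← eq_inv_mul_iff_mul_eq₀ hI, mul_one, mul_neg_one, and_iff_right_iff_imp]
  have := inv_ne_zero hI
  rintro (rfl | rfl) (⟨-, h⟩ | ⟨-, h⟩) <;> simp_all

theorem mk_left_injective (hodd : Odd p) {c : ZMod p} (hc : c ≠ 0) :
    Function.Injective fun x => mk x c (Or.inr hc) := by
  intro x x' h
  rcases (mk_eq_mk_iff_s12 _ _).1 h with ⟨hx, -⟩ | ⟨-, hc'⟩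
  · exact hx.symm
  · exact absurd hc' (ZMod.ne_neg_self hodd hc)

theorem range_mk_inv_eq_neighborSet {I : ZMod p} (hI : I ≠ 0) :
    Set.range (fun x => mk x I⁻¹ (Or.inr (inv_ne_zero hI))) =
      (Platonic p).neighborSet (mk I 0 (Or.inl hI)) := by
  ext v
  obtain ⟨x, y, h, rfl⟩ := exists_eq_mk v
  rw [Set.mem_range, SimpleGraph.mem_neighborSet, adj_mk_zero_iff hI]
  simp only [mk_eq_mk_iff_s12]
  constructor
  · rintro ⟨μ, ⟨-, rfl⟩ | ⟨-, rfl⟩⟩ <;> simp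
  · rintro (rfl | rfl)
    · exact ⟨x, .inl ⟨rfl, rfl⟩⟩
    · exact ⟨-x, .inr ⟨(neg_neg x).symm, rfl⟩⟩

theorem adj_mk_inv_mk_inv {I J : ZMod p} (hI : I ≠ 0) (hJ : J ≠ 0) (hIJ : I ≠ J) (hIJ' : I ≠ -J)
    (x : ZMod p) :
    (Platonic p).Adj (mk x I⁻¹ (Or.inr (inv_ne_zero hI)))
      (mk (I + I * J⁻¹ * x) J⁻¹ (Or.inr (inv_ne_zero hJ))) := by
  rw [adj_mk_iff, ne_eq, mk_eq_mk_iff_s12]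
  refine ⟨?_, Or.inr (by field_simp; ring)⟩
  rintro (⟨-, h⟩ | ⟨-, h⟩)
  · exact hIJ (inv_injective h).symm
  · exact hIJ' (by rw [← inv_neg] at h; rw [inv_injective h, neg_neg])

noncomputable def wheelEquiv (hodd : Odd p) {I : ZMod p} (hI : I ≠ 0) :
    ZMod p ≃ (Platonic p).neighborSet (mk I 0 (Or.inl hI)) :=
  (Equiv.ofInjective _ (mk_left_injective hodd (inv_ne_zero hI))).trans
    (Equiv.setCongr (range_mk_inv_eq_neighborSet hI))

end PlatonicVertex

open PlatonicVertex in
theorem platonic_wheel_matching_general (p : ℕ) (hp : p.Prime) (hodd : Odd p)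
    (i j : ℕ) (hi1 : 1 ≤ i) (hi2 : i ≤ (p - 1) / 2)
    (hj1 : 1 ≤ j) (hj2 : j ≤ (p - 1) / 2) (hij : i ≠ j)
    (ai aj : PlatonicVertex p)
    (hai : ∃ x : PlatonicPair p, ⟦x⟧ = ai ∧ x.val = ((i : ZMod p), 0))
    (haj : ∃ x : PlatonicPair p, ⟦x⟧ = aj ∧ x.val = ((j : ZMod p), 0)) :
    ∃ Φ : (Platonic p).neighborSet ai ≃ (Platonic p).neighborSet aj,
      ∀ v : (Platonic p).neighborSet ai, (Platonic p).Adj v.val (Φ v).val := by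
  have := Fact.mk hp
  have hcast (a b : ℕ) (ha : a < p) (hb : b < p) (hab : a ≠ b) : (a : ZMod p) ≠ b :=
    fun h => hab (CharP.natCast_injOn_Iio (ZMod p) p ha hb h)
  have hI : (i : ZMod p) ≠ 0 := by exact_mod_cast hcast i 0 (by omega) (by omega) (by omega)
  have hJ : (j : ZMod p) ≠ 0 := by exact_mod_cast hcast j 0 (by omega) (by omega) (by omega)
  have hIJ : (i : ZMod p) ≠ j := hcast i j (by omega) (by omega) hij
  have hIJ' : (i : ZMod p) ≠ -j := by
    rw [ne_eq, eq_neg_iff_add_eq_zero]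
    exact_mod_cast hcast (i + j) 0 (by omega) (by omega) (by omega)
  obtain rfl := eq_mk (Or.inl hI) hai
  obtain rfl := eq_mk (Or.inl hJ) haj
  let shift : ZMod p ≃ ZMod p := (Equiv.mulLeft₀ _ (mul_ne_zero hI (inv_ne_zero hJ))).trans
    (Equiv.addLeft (i : ZMod p))
  refine ⟨(wheelEquiv hodd hI).symm.trans (shift.trans (wheelEquiv hodd hJ)), fun v => ?_⟩
  obtain ⟨x, rfl⟩ := (wheelEquiv hodd hI).surjective v
  rw [Equiv.trans_apply, Equiv.symm_apply_apply]
  exact adj_mk_inv_mk_inv hI hJ hIJ hIJ' x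

/-- For distinct wheels `W_i`, `W_j` of `Π_p` (`1 ≤ i, j ≤ (p-1)/2`, `i ≠ j`), there is
a bijection `Φ` from the neighbours of `[i,0]` to the neighbours of `[j,0]` such that
`v` is adjacent to `Φ(v)` for every neighbour `v` of `[i,0]`. -/
theorem platonic_wheel_matching (p : ℕ) (hp : p.Prime) (hodd : Odd p) [NeZero p]
    (i j : ℕ) (hi1 : 1 ≤ i) (hi2 : i ≤ (p - 1) / 2)
    (hj1 : 1 ≤ j) (hj2 : j ≤ (p - 1) / 2) (hij : i ≠ j)
    (ai aj : PlatonicVertex p)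
    (hai : ∃ x : PlatonicPair p, ⟦x⟧ = ai ∧ x.val = ((i : ZMod p), 0))
    (haj : ∃ x : PlatonicPair p, ⟦x⟧ = aj ∧ x.val = ((j : ZMod p), 0)) :
    ∃ Φ : (Platonic p).neighborSet ai ≃ (Platonic p).neighborSet aj,
      ∀ v : (Platonic p).neighborSet ai, (Platonic p).Adj v.val (Φ v).val :=
  platonic_wheel_matching_general p hp hodd i j hi1 hi2 hj1 hj2 hij ai aj hai haj
end

section
/- Let p be an odd prime, and define π from the vertex set of Π_p to the projective line ℙ¹(𝔽_p) by sending the class [λ,μ] to the projective point with homogeneous coordinates (λ : μ) (this is well defined since (λ,μ) ≠ (0,0) and (λ,μ), (−λ,−μ) determine the same projective point). Then: (i) every fiber of π has exactly (p−1)/2 elements, so π is surjective onto the p+1 points of ℙ¹(𝔽_p); (ii) if v and w are adjacent in Π_p then π(v) ≠ π(w); and (iii) for every vertex v of Π_p and every point c ∈ ℙ¹(𝔽_p) with c ≠ π(v), there is exactly one neighbour w of v in Π_p with π(w) = c. In other words, π exhibits Π_p as an ((p−1)/2)-fold covering of the complete graph K_{p+1} on ℙ¹(𝔽_p). -/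
/-- The vector `(λ, μ)` associated to a Platonic pair is nonzero (for `p` prime). -/
theorem platonicPair_vec_ne_zero (p : ℕ) [hp : Fact p.Prime] (x : PlatonicPair p) :
    (![x.val.1, x.val.2] : Fin 2 → ZMod p) ≠ 0 := by
  intro h0
  have h1 : x.val.1 = 0 := by simpa using congrFun h0 0
  have h2 : x.val.2 = 0 := by simpa using congrFun h0 1
  have hx := x.property
  rw [h1, h2] at hx
  simp [ZMod.val_zero] at hx
  exact hp.out.one_lt.ne' hx

/-- The covering map `π` from the vertices of `Π_p` to the projective line
`ℙ¹(𝔽_p)`, sending the class `[λ,μ]` to the projective point `(λ : μ)`. -/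
def projPi (p : ℕ) [Fact p.Prime] :
    PlatonicVertex p → Projectivization (ZMod p) (Fin 2 → ZMod p) :=
  Quotient.lift
    (fun x => Projectivization.mk (ZMod p) ![x.val.1, x.val.2]
      (platonicPair_vec_ne_zero p x))
    (by
      intro x y hxy
      rw [Projectivization.mk_eq_mk_iff]
      rcases hxy with h | h
      · exact ⟨1, by rw [h]; simp⟩
      · refine ⟨-1, ?_⟩
        have h1 : y.val.1 = -x.val.1 := by rw [h]; simp
        have h2 : y.val.2 = -x.val.2 := by rw [h]; simp
        funext k
        fin_cases k <;> simp [h1, h2, Units.smul_def])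

/-!
A vertex is a nonzero vector of `𝔽_p²` up to sign, and two vectors have the same image under `π`
iff their determinant vanishes. Hence adjacent vertices (determinant `±1`) lie over distinct
points. The fibre over `π[y]` is `{[t • y] | t ∈ 𝔽_pˣ}`, and `t ↦ [t • y]` is exactly two-to-one
(`[s • y] = [t • y]` iff `s = ±t`), so it has `(p - 1) / 2` elements. If `c = π[y] ≠ π[x]`, then
`d = det(x, y) ≠ 0`, and the neighbours `[t • y]` of `[x]` over `c` are those with `t * d = ±1`,
i.e. the single class `[d⁻¹ • y]`.
-/

open Finset in
theorem Finset.card_eq_mul_card_image_of_card_fiber {α β : Type*} [DecidableEq β] {f : α → β}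
    {s : Finset α} {n : ℕ} (hn : ∀ a ∈ s, #{b ∈ s | f b = f a} = n) :
    #s = n * #(s.image f) := by
  rw [card_eq_sum_card_fiberwise fun a ha => mem_image_of_mem f ha,
    sum_congr rfl fun b hb => ?_, sum_const, smul_eq_mul, mul_comm]
  obtain ⟨a, ha, rfl⟩ := mem_image.1 hb
  exact hn a ha

theorem Projectivization.mk_eq_mk_iff_mul_sub_mul_eq_zero {K : Type*} [Field K] {u v : Fin 2 → K}
    (hu : u ≠ 0) (hv : v ≠ 0) : mk K u hu = mk K v hv ↔ u 0 * v 1 - u 1 * v 0 = 0 := by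
  rw [mk_eq_mk_iff']
  constructor
  · rintro ⟨a, rfl⟩
    simp only [Pi.smul_apply, smul_eq_mul]
    ring
  · intro h
    by_cases hv0 : v 0 = 0
    · have hv1 : v 1 ≠ 0 := fun hv1 => hv (funext (Fin.forall_fin_two.2 ⟨hv0, hv1⟩))
      have hu0 : u 0 = 0 := by simpa [hv0, hv1] using h
      refine ⟨u 1 / v 1, funext (Fin.forall_fin_two.2 ⟨?_, ?_⟩)⟩
      · simp [hu0, hv0]
      · simp [div_mul_cancel₀ _ hv1]
    · refine ⟨u 0 / v 0, funext (Fin.forall_fin_two.2 ⟨?_, ?_⟩)⟩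
      · simp [div_mul_cancel₀ _ hv0]
      · simp only [Pi.smul_apply, smul_eq_mul]
        field_simp
        linear_combination h

namespace PlatonicPair

def det {N : ℕ} (x y : PlatonicPair N) : ZMod N := x.val.1 * y.val.2 - x.val.2 * y.val.1

theorem det_eq_or_eq_neg_of_equiv {N : ℕ} {x x' y y' : PlatonicPair N} (hx : x ≈ x')
    (hy : y ≈ y') : det x' y' = det x y ∨ det x' y' = -det x y := by
  unfold det
  rcases hx with hx | hx <;> rcases hy with hy | hy <;> rw [hx, hy]
  · left; rfl
  · right; simp only [Prod.snd_neg, Prod.fst_neg]; ring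
  · right; simp only [Prod.snd_neg, Prod.fst_neg]; ring
  · left; simp only [Prod.snd_neg, Prod.fst_neg]; ring

end PlatonicPair

open PlatonicPair

theorem Platonic.adj_mk_iff_s15 {N : ℕ} [Nontrivial (ZMod N)] (x y : PlatonicPair N) :
    (Platonic N).Adj ⟦x⟧ ⟦y⟧ ↔ det x y = 1 ∨ det x y = -1 := by
  constructor
  · rintro ⟨-, x', y', hx', hy', hdet⟩
    rcases det_eq_or_eq_neg_of_equiv (Quotient.exact hx') (Quotient.exact hy') with h | h
    · rwa [h]
    · rw [h, neg_eq_iff_eq_neg, neg_eq_iff_eq_neg, neg_neg]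
      exact hdet.symm
  · intro hdet
    refine ⟨fun hxy => ?_, x, y, rfl, rfl, hdet⟩
    have hxx : det x x = 0 := by unfold det; ring
    rcases det_eq_or_eq_neg_of_equiv (Setoid.refl x) (Quotient.exact hxy) with h | h <;>
      rw [h, hxx] at hdet <;> simp at hdet

section Prime

variable {p : ℕ} [Fact p.Prime]

namespace PlatonicPair

theorem gcd_eq_one_iff_ne_zero {w : ZMod p × ZMod p} :
    Nat.gcd (Nat.gcd w.1.val w.2.val) p = 1 ↔ w ≠ 0 := by
  have hdvd (a : ZMod p) : p ∣ a.val ↔ a = 0 := by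
    rw [← ZMod.natCast_eq_zero_iff, ZMod.natCast_zmod_val]
  rw [Nat.gcd_comm, ← Nat.Coprime, Nat.Prime.coprime_iff_not_dvd Fact.out, Nat.dvd_gcd_iff,
    hdvd, hdvd, Ne, Prod.ext_iff]
  rfl

instance : SMul (ZMod p)ˣ (PlatonicPair p) :=
  ⟨fun t x => ⟨t • x.val, gcd_eq_one_iff_ne_zero.2 <|
    (smul_ne_zero_iff_ne t).2 (gcd_eq_one_iff_ne_zero.1 x.2)⟩⟩

theorem val_smul (t : (ZMod p)ˣ) (x : PlatonicPair p) : (t • x).val = t • x.val := rfl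

theorem det_smul_right (t : (ZMod p)ˣ) (x y : PlatonicPair p) :
    det x (t • y) = t * det x y := by
  simp only [det, val_smul, Prod.smul_fst, Prod.smul_snd, Units.smul_def, smul_eq_mul]
  ring

theorem mk_smul_eq_mk_smul_iff (s t : (ZMod p)ˣ) (x : PlatonicPair p) :
    (⟦s • x⟧ : PlatonicVertex p) = ⟦t • x⟧ ↔ t = s ∨ t = -s := by
  have hinj : Function.Injective fun r : (ZMod p)ˣ => r • x.val := fun r r' h =>
    Units.ext <| smul_left_injective (ZMod p) (gcd_eq_one_iff_ne_zero.1 x.2) h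
  rw [Quotient.eq]
  change (t • x).val = (s • x).val ∨ (t • x).val = -(s • x).val ↔ _
  rw [val_smul, val_smul, ← Units.neg_smul, hinj.eq_iff, hinj.eq_iff]

end PlatonicPair

open Projectivization

theorem projPi_mk (x : PlatonicPair p) :
    projPi p ⟦x⟧ = mk (ZMod p) ![x.val.1, x.val.2] (platonicPair_vec_ne_zero p x) := rfl

theorem projPi_mk_eq_projPi_mk_iff_det_eq_zero (x y : PlatonicPair p) :
    projPi p ⟦x⟧ = projPi p ⟦y⟧ ↔ det x y = 0 :=
  mk_eq_mk_iff_mul_sub_mul_eq_zero _ _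

theorem projPi_mk_eq_projPi_mk_iff_exists_smul (x y : PlatonicPair p) :
    projPi p ⟦x⟧ = projPi p ⟦y⟧ ↔ ∃ t : (ZMod p)ˣ, t • y = x := by
  rw [projPi_mk, projPi_mk, mk_eq_mk_iff]
  refine exists_congr fun t => ?_
  simp [funext_iff, Fin.forall_fin_two, Subtype.ext_iff, Prod.ext_iff, val_smul]

theorem projPi_mk_smul (t : (ZMod p)ˣ) (x : PlatonicPair p) : projPi p ⟦t • x⟧ = projPi p ⟦x⟧ :=
  (projPi_mk_eq_projPi_mk_iff_exists_smul _ _).2 ⟨t, rfl⟩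

theorem projPi_surjective : Function.Surjective (projPi p) := by
  refine Projectivization.ind fun u hu => ?_
  have hu' : (u 0, u 1) ≠ 0 := fun h => hu (funext (Fin.forall_fin_two.2 (Prod.ext_iff.1 h)))
  refine ⟨⟦⟨(u 0, u 1), gcd_eq_one_iff_ne_zero.2 hu'⟩⟧, ?_⟩
  rw [projPi_mk, mk_eq_mk_iff']
  exact ⟨1, funext (Fin.forall_fin_two.2 ⟨by simp, by simp⟩)⟩

theorem projPi_fiber_eq_range (y : PlatonicPair p) :
    {v | projPi p v = projPi p ⟦y⟧} = Set.range fun t : (ZMod p)ˣ => ⟦t • y⟧ := by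
  ext v
  induction v using Quotient.inductionOn with | h z => ?_
  constructor
  · intro h
    obtain ⟨t, rfl⟩ := (projPi_mk_eq_projPi_mk_iff_exists_smul z y).1 h
    exact ⟨t, rfl⟩
  · rintro ⟨t, ht⟩
    rw [← ht]
    exact projPi_mk_smul t y

theorem ncard_projPi_fiber (hodd : Odd p) (c : Projectivization (ZMod p) (Fin 2 → ZMod p)) :
    {v : PlatonicVertex p | projPi p v = c}.ncard = (p - 1) / 2 := by
  classical
  obtain ⟨v, rfl⟩ := projPi_surjective c
  induction v using Quotient.inductionOn with | h y => ?_
  let f : (ZMod p)ˣ → PlatonicVertex p := fun t => ⟦t • y⟧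
  have hcard : p - 1 = 2 * (Finset.univ.image f).card := by
    rw [← ZMod.card_units p, ← Finset.card_univ]
    refine Finset.card_eq_mul_card_image_of_card_fiber fun t _ => ?_
    have hpair : ({s | f s = f t} : Finset (ZMod p)ˣ) = {t, -t} := by
      ext s
      simp [f, mk_smul_eq_mk_smul_iff, eq_comm]
    rw [hpair, Finset.card_pair (ZMod.ne_neg_self hodd t.ne_zero ∘ congrArg Units.val)]
  rw [projPi_fiber_eq_range, ← Set.image_univ, ← Finset.coe_univ, ← Finset.coe_image,
    Set.ncard_coe_finset, hcard, Nat.mul_div_cancel_left _ two_pos]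

theorem projPi_ne_of_adj {v w : PlatonicVertex p} (h : (Platonic p).Adj v w) :
    projPi p v ≠ projPi p w := by
  induction v using Quotient.inductionOn with | h x => ?_
  induction w using Quotient.inductionOn with | h y => ?_
  rw [Ne, projPi_mk_eq_projPi_mk_iff_det_eq_zero]
  rcases (Platonic.adj_mk_iff_s15 x y).1 h with h | h <;> simp [h]

theorem existsUnique_adj_projPi_eq {v : PlatonicVertex p}
    {c : Projectivization (ZMod p) (Fin 2 → ZMod p)} (hc : c ≠ projPi p v) :
    ∃! w, (Platonic p).Adj v w ∧ projPi p w = c := by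
  obtain ⟨w, rfl⟩ := projPi_surjective c
  induction w using Quotient.inductionOn with | h y => ?_
  induction v using Quotient.inductionOn with | h x => ?_
  have hd : det x y ≠ 0 := fun h => hc ((projPi_mk_eq_projPi_mk_iff_det_eq_zero x y).2 h).symm
  set d := Units.mk0 _ hd
  refine ⟨⟦d⁻¹ • y⟧, ⟨(Platonic.adj_mk_iff_s15 _ _).2 (Or.inl ?_), projPi_mk_smul _ _⟩, ?_⟩
  · rw [det_smul_right, ← Units.val_mk0 hd, Units.inv_mul]
  rintro w ⟨hadj, hw⟩
  induction w using Quotient.inductionOn with | h z => ?_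
  obtain ⟨t, rfl⟩ := (projPi_mk_eq_projPi_mk_iff_exists_smul z y).1 hw
  rw [Platonic.adj_mk_iff_s15, det_smul_right] at hadj
  have htd : t * d = 1 ∨ t * d = -1 := by
    simpa only [Units.ext_iff, Units.val_mul, Units.val_one, Units.val_neg, Units.val_mk0, d]
      using hadj
  rw [mk_smul_eq_mk_smul_iff]
  rcases htd with h | h
  · exact Or.inl (eq_inv_of_mul_eq_one_left h).symm
  · exact Or.inr (eq_inv_of_mul_eq_one_left (by rw [neg_mul, h, neg_neg])).symm

end Prime

/-- `π` exhibits `Π_p` as an `((p-1)/2)`-fold covering of the complete graph on the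
`p+1` points of `ℙ¹(𝔽_p)`: (i) every fiber of `π` has exactly `(p-1)/2` elements, so
`π` is surjective onto the `p+1` points of `ℙ¹(𝔽_p)`; (ii) adjacent vertices of `Π_p`
have distinct images; (iii) for every vertex `v` and every point `c ≠ π(v)` there is
exactly one neighbour `w` of `v` with `π(w) = c`. -/
theorem platonic_covering_of_complete_graph (p : ℕ) [hp : Fact p.Prime]
    (hodd : Odd p) :
    (∀ c : Projectivization (ZMod p) (Fin 2 → ZMod p),
      {v : PlatonicVertex p | projPi p v = c}.ncard = (p - 1) / 2) ∧
    Function.Surjective (projPi p) ∧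
    Nat.card (Projectivization (ZMod p) (Fin 2 → ZMod p)) = p + 1 ∧
    (∀ v w : PlatonicVertex p, (Platonic p).Adj v w → projPi p v ≠ projPi p w) ∧
    (∀ (v : PlatonicVertex p) (c : Projectivization (ZMod p) (Fin 2 → ZMod p)),
      c ≠ projPi p v →
      ∃! w : PlatonicVertex p, (Platonic p).Adj v w ∧ projPi p w = c) :=
  ⟨ncard_projPi_fiber hodd, projPi_surjective,
    by rw [Projectivization.card_of_finrank_two _ _ (Module.finrank_fin_fun _), Nat.card_zmod],
    fun _ _ => projPi_ne_of_adj, fun _ _ => existsUnique_adj_projPi_eq⟩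
end

section
/- Let p be an odd prime and 1 ≤ i ≤ (p−1)/2. Then any two distinct vertices of Π_p' lying in the same wheel boundary ∂W_i have a common neighbour in Π_p'; explicitly, for distinct [μ, i⁻¹], [ν, i⁻¹] ∈ ∂W_i, the vertex [2(μ−ν)⁻¹μi − i, 2(μ−ν)⁻¹] is adjacent in Π_p' to both of them. -/
/-!
With `a = 2(μ - ν)⁻¹`, the determinant of the representative `(aμi - i, a)` of `u` against
`(μ, i⁻¹)` is `-1` and against `(ν, i⁻¹)` it is `a(μ - ν) - 1 = 1`. A determinant `±1` already
forces the two classes to be distinct, because the determinant of `x` against `±x` vanishes.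
-/

def det₂ {R : Type*} [CommRing R] (x y : R × R) : R := x.1 * y.2 - x.2 * y.1

section CommonNeighbour

variable {K : Type*} [Field K] {i μ ν : K}

theorem det₂_commonNeighbour_left (hi : i ≠ 0) :
    det₂ (2 * (μ - ν)⁻¹ * μ * i - i, 2 * (μ - ν)⁻¹) (μ, i⁻¹) = -1 := by
  unfold det₂
  field_simp
  ring

theorem det₂_commonNeighbour_right (hi : i ≠ 0) (hμν : μ ≠ ν) :
    det₂ (2 * (μ - ν)⁻¹ * μ * i - i, 2 * (μ - ν)⁻¹) (ν, i⁻¹) = 1 := by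
  have : μ - ν ≠ 0 := sub_ne_zero.2 hμν
  unfold det₂
  field_simp
  ring

end CommonNeighbour

namespace Platonic

variable {N : ℕ}

theorem adj_mk_of_det₂ [Nontrivial (ZMod N)] (x y : PlatonicPair N)
    (h : det₂ x.val y.val = 1 ∨ det₂ x.val y.val = -1) : (Platonic N).Adj ⟦x⟧ ⟦y⟧ := by
  refine ⟨fun hxy => ?_, x, y, rfl, rfl, h⟩
  have hdet : det₂ x.val y.val = 0 := by
    rcases Quotient.exact hxy with e | e <;>
      simp only [det₂, e, Prod.fst_neg, Prod.snd_neg] <;> ring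
  rcases h with h | h <;> simp [hdet] at h

theorem secondNZ_mk_iff (x : PlatonicPair N) : secondNZ N ⟦x⟧ ↔ x.val.2 ≠ 0 := by
  refine ⟨fun h => h x rfl, fun hx y hy => ?_⟩
  rcases Quotient.exact hy with e | e
  · rwa [e] at hx
  · rwa [e, Prod.snd_neg, neg_ne_zero] at hx

end Platonic

theorem modPlatonic_common_neighbour_general (p : ℕ) (hp : p.Prime) (hodd : Odd p)
    (i : ℕ) (hi1 : 1 ≤ i) (hi2 : i ≤ (p - 1) / 2)
    (μ ν : ZMod p) (v w u : PlatonicVertex p)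
    (hv : ∃ x : PlatonicPair p, ⟦x⟧ = v ∧ x.val = (μ, ((i : ZMod p))⁻¹))
    (hw : ∃ x : PlatonicPair p, ⟦x⟧ = w ∧ x.val = (ν, ((i : ZMod p))⁻¹))
    (hu : ∃ x : PlatonicPair p, ⟦x⟧ = u ∧
      x.val = (2 * (μ - ν)⁻¹ * μ * (i : ZMod p) - (i : ZMod p), 2 * (μ - ν)⁻¹))
    (hvw : v ≠ w) :
    (Platonic p).Adj u v ∧ (Platonic p).Adj u w ∧ secondNZ p u := by
  have := Fact.mk hp
  obtain ⟨x, rfl, hx⟩ := hv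
  obtain ⟨y, rfl, hy⟩ := hw
  obtain ⟨z, rfl, hz⟩ := hu
  have hi : (i : ZMod p) ≠ 0 := by
    rw [Ne, ZMod.natCast_eq_zero_iff]
    exact Nat.not_dvd_of_pos_of_lt hi1 (by omega)
  have h2 : (2 : ZMod p) ≠ 0 := Ring.two_ne_zero <| by
    rw [ZMod.ringChar_zmod_n]
    rintro rfl
    exact absurd hodd (by decide)
  have hμν : μ ≠ ν := fun h => hvw (congrArg _ (Subtype.ext (by rw [hx, hy, h])))
  refine ⟨Platonic.adj_mk_of_det₂ z x (Or.inr ?_), Platonic.adj_mk_of_det₂ z y (Or.inl ?_),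
    (Platonic.secondNZ_mk_iff z).2 ?_⟩
  · rw [hz, hx]
    exact det₂_commonNeighbour_left hi
  · rw [hz, hy]
    exact det₂_commonNeighbour_right hi hμν
  · rw [hz]
    exact mul_ne_zero h2 (inv_ne_zero (sub_ne_zero.2 hμν))

/-- Two distinct vertices `[μ,i⁻¹]`, `[ν,i⁻¹]` of the same wheel boundary `∂W_i` of
`Π_p'` have a common neighbour in `Π_p'`: explicitly, the vertex
`[2(μ-ν)⁻¹μi - i, 2(μ-ν)⁻¹]` is adjacent to both, and it lies in `Π_p'`. -/
theorem modPlatonic_common_neighbour (p : ℕ) (hp : p.Prime) (hodd : Odd p) [NeZero p]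
    (i : ℕ) (hi1 : 1 ≤ i) (hi2 : i ≤ (p - 1) / 2)
    (μ ν : ZMod p) (v w u : PlatonicVertex p)
    (hv : ∃ x : PlatonicPair p, ⟦x⟧ = v ∧ x.val = (μ, ((i : ZMod p))⁻¹))
    (hw : ∃ x : PlatonicPair p, ⟦x⟧ = w ∧ x.val = (ν, ((i : ZMod p))⁻¹))
    (hu : ∃ x : PlatonicPair p, ⟦x⟧ = u ∧
      x.val = (2 * (μ - ν)⁻¹ * μ * (i : ZMod p) - (i : ZMod p), 2 * (μ - ν)⁻¹))
    (hvw : v ≠ w) :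
    (Platonic p).Adj u v ∧ (Platonic p).Adj u w ∧ secondNZ p u :=
  modPlatonic_common_neighbour_general p hp hodd i hi1 hi2 μ ν v w u hv hw hu hvw
end
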